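/- arXiv:1512.00726 — 3 statements merged into one kernel-verified Lean document; each statement's English description precedes it below -/
import Mathlib

section
/- Let G be a connected graph of order n ≥ 3 that contains a bridge, and let b be the maximum number of bridges of G incident with a single vertex. Then tpc(G) ≥ b + 1. -/
open SimpleGraph

variable {V : Type*} {α : Type*}

/-- A walk in a total-colored graph (vertex coloring `cv`, edge coloring `ce`) is a
*total proper* walk if (i) any two adjacent edges on it differ in color, (ii) any two
internal adjacent vertices on it differ in color, and (iii) any internal vertex differs
in color from its incident edges on the walk. -/
def IsTotalProperWalk {G : SimpleGraph V} (cv : V → α) (ce : Sym2 V → α)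
    {u v : V} (w : G.Walk u v) : Prop :=
  (∀ i : ℕ, i + 1 < w.length →
      ce (w.edges.getD i s(u, u)) ≠ ce (w.edges.getD (i + 1) s(u, u))) ∧
  (∀ i : ℕ, 1 ≤ i → i + 1 < w.length →
      cv (w.support.getD i u) ≠ cv (w.support.getD (i + 1) u)) ∧
  (∀ i : ℕ, 1 ≤ i → i < w.length →
      cv (w.support.getD i u) ≠ ce (w.edges.getD (i - 1) s(u, u)) ∧
      cv (w.support.getD i u) ≠ ce (w.edges.getD i s(u, u)))

/-- A total-colored graph is total proper connected if any two vertices are joined by a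
total proper path. -/
def TotalProperConnected (G : SimpleGraph V) (cv : V → α) (ce : Sym2 V → α) : Prop :=
  ∀ u v : V, ∃ w : G.Walk u v, w.IsPath ∧ IsTotalProperWalk cv ce w

/-- The total proper connection number: the smallest number of colors in a total coloring
making the graph total proper connected. -/
noncomputable def tpc (G : SimpleGraph V) : ℕ :=
  sInf {k | ∃ (cv : V → Fin k) (ce : Sym2 V → Fin k), TotalProperConnected G cv ce}

/-! If `vx` and `vy` are bridges at `v`, every path from `x` to `y` runs through both of them
with `v` as an internal vertex. Hence a total proper connected coloring gives the bridges at `v`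
pairwise distinct colors, all different from the color of `v`: that is `b + 1` colors once
`b ≥ 2`. For `b ≤ 1` it suffices to see two colors: for a bridge `vx` and a third vertex `z`, the
path from `z` to `x` or the one from `z` to `v` crosses `vx` with `v`, resp. `x`, internal. -/

namespace SimpleGraph.Walk

variable {G : SimpleGraph V} {u w : V}

lemma getD_edges (p : G.Walk u w) {i : ℕ} (hi : i < p.length) (d : Sym2 V) :
    p.edges.getD i d = s(p.getVert i, p.getVert (i + 1)) := by
  rw [List.getD_eq_getElem _ _ (by simpa using hi), getElem_edges]

lemma getD_support (p : G.Walk u w) {i : ℕ} (hi : i ≤ p.length) (d : V) :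
    p.support.getD i d = p.getVert i := by
  rw [List.getD_eq_getElem _ _ (by simp; omega), support_getElem_eq_getVert]

lemma exists_eq_mk_getVert_of_mem_edges {p : G.Walk u w} {e : Sym2 V} (he : e ∈ p.edges) :
    ∃ i < p.length, e = s(p.getVert i, p.getVert (i + 1)) := by
  obtain ⟨i, hi, rfl⟩ := List.getElem_of_mem he
  exact ⟨i, by simpa using hi, getElem_edges hi⟩

end SimpleGraph.Walk

namespace SimpleGraph.IsBridge

variable {G : SimpleGraph V} {v x y : V}

lemma ne (h : G.IsBridge s(v, x)) : v ≠ x := by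
  rintro rfl
  exact h (Reachable.refl v)

lemma mem_edges_or_mem_edges (h : G.IsBridge s(v, x)) (p : G.Walk v y) (q : G.Walk y x) :
    s(v, x) ∈ p.edges ∨ s(v, x) ∈ q.edges := by
  simpa [Walk.edges_append] using isBridge_iff_forall_walk_mem_edges.mp h (p.append q)

lemma mem_edges_of_adj (h : G.IsBridge s(v, x)) (hvy : G.Adj v y) (hxy : x ≠ y)
    (p : G.Walk y x) : s(v, x) ∈ p.edges := by
  have := isBridge_iff_forall_walk_mem_edges.mp h (.cons hvy p)
  simpa [Walk.edges_cons, Sym2.congr_right, hxy, hvy.ne] using this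

end SimpleGraph.IsBridge

namespace IsTotalProperWalk

variable {G : SimpleGraph V} {cv : V → α} {ce : Sym2 V → α} {u w : V}
  {p : G.Walk u w}

lemma edge_color_ne (ht : IsTotalProperWalk cv ce p) {i : ℕ} (hi : i + 1 < p.length) :
    ce s(p.getVert i, p.getVert (i + 1)) ≠ ce s(p.getVert (i + 1), p.getVert (i + 2)) := by
  simpa only [p.getD_edges hi, p.getD_edges (i := i) (by omega)] using ht.1 i hi

lemma vertex_color_ne_prev_edge (ht : IsTotalProperWalk cv ce p) {i : ℕ}
    (hi : i + 1 < p.length) : cv (p.getVert (i + 1)) ≠ ce s(p.getVert i, p.getVert (i + 1)) := by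
  simpa only [p.getD_support (i := i + 1) (by omega), Nat.add_sub_cancel,
    p.getD_edges (i := i) (by omega)] using (ht.2.2 (i + 1) (by omega) hi).1

lemma vertex_color_ne_next_edge (ht : IsTotalProperWalk cv ce p) {i : ℕ} (h0 : 0 < i)
    (hi : i < p.length) : cv (p.getVert i) ≠ ce s(p.getVert i, p.getVert (i + 1)) := by
  simpa only [p.getD_support hi.le, p.getD_edges hi] using (ht.2.2 i h0 hi).2

lemma vertex_color_ne_of_mem_edges (ht : IsTotalProperWalk cv ce p) {v : V} {e : Sym2 V}
    (hvu : v ≠ u) (hvw : v ≠ w) (he : e ∈ p.edges) (hve : v ∈ e) : cv v ≠ ce e := by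
  obtain ⟨i, hi, rfl⟩ := Walk.exists_eq_mk_getVert_of_mem_edges he
  rcases Sym2.mem_iff.mp hve with rfl | rfl
  · have h0 : i ≠ 0 := by rintro rfl; exact hvu p.getVert_zero
    exact ht.vertex_color_ne_next_edge (Nat.pos_of_ne_zero h0) hi
  · have hlen : i + 1 ≠ p.length := by intro h; rw [h] at hvw; exact hvw p.getVert_length
    exact ht.vertex_color_ne_prev_edge (by omega)

lemma edge_color_ne_of_mem_edges (ht : IsTotalProperWalk cv ce p) (hp : p.IsPath) {v : V}
    {e₁ e₂ : Sym2 V} (he₁ : e₁ ∈ p.edges) (he₂ : e₂ ∈ p.edges) (hv₁ : v ∈ e₁) (hv₂ : v ∈ e₂)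
    (hne : e₁ ≠ e₂) : ce e₁ ≠ ce e₂ := by
  obtain ⟨i, hi, rfl⟩ := Walk.exists_eq_mk_getVert_of_mem_edges he₁
  obtain ⟨j, hj, rfl⟩ := Walk.exists_eq_mk_getVert_of_mem_edges he₂
  have hij : i ≠ j := by rintro rfl; exact hne rfl
  have hadj : j = i + 1 ∨ i = j + 1 := by
    rcases Sym2.mem_iff.mp hv₁ with rfl | rfl <;> rcases Sym2.mem_iff.mp hv₂ with h | h <;>
      have := hp.getVert_injOn (by simp; omega) (by simp; omega) h <;> omega
  rcases hadj with rfl | rfl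
  · exact ht.edge_color_ne hj
  · exact (ht.edge_color_ne hi).symm

lemma comp_injective {β : Type*} (ht : IsTotalProperWalk cv ce p) {f : α → β} (hf : f.Injective) :
    IsTotalProperWalk (f ∘ cv) (f ∘ ce) p :=
  ⟨fun i hi ↦ hf.ne (ht.1 i hi), fun i h1 hi ↦ hf.ne (ht.2.1 i h1 hi),
    fun i h1 hi ↦ ⟨hf.ne (ht.2.2 i h1 hi).1, hf.ne (ht.2.2 i h1 hi).2⟩⟩

end IsTotalProperWalk

lemma SimpleGraph.Walk.IsPath.isTotalProperWalk_inl_inr {G : SimpleGraph V} {u w : V}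
    {p : G.Walk u w} (hp : p.IsPath) :
    IsTotalProperWalk (Sum.inl : V → V ⊕ Sym2 V) Sum.inr p := by
  refine ⟨fun i hi h ↦ ?_, fun i _ hi h ↦ ?_, fun _ _ _ ↦ ⟨Sum.inl_ne_inr, Sum.inl_ne_inr⟩⟩
  · rw [List.getD_eq_getElem _ _ (by simp; omega), List.getD_eq_getElem _ _ (by simpa using hi),
      Sum.inr_injective.eq_iff, hp.edges_nodup.getElem_inj_iff] at h
    omega
  · rw [p.getD_support (by omega), p.getD_support (by omega), Sum.inl_injective.eq_iff] at h
    have := hp.getVert_injOn (by simp; omega) (by simp; omega) h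
    omega

namespace TotalProperConnected

variable {G : SimpleGraph V} {cv : V → α} {ce : Sym2 V → α}

lemma comp_injective {β : Type*} (h : TotalProperConnected G cv ce) {f : α → β}
    (hf : f.Injective) : TotalProperConnected G (f ∘ cv) (f ∘ ce) := fun u v ↦
  (h u v).imp fun _ hp ↦ ⟨hp.1, hp.2.comp_injective hf⟩

lemma edge_color_ne_of_isBridge (h : TotalProperConnected G cv ce) (hG : G.Connected)
    {v x y : V} (hx : G.IsBridge s(v, x)) (hy : G.IsBridge s(v, y)) (hxy : x ≠ y) :
    ce s(v, x) ≠ ce s(v, y) ∧ cv v ≠ ce s(v, x) := by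
  have hvx : G.Adj v x := hx.reachable_iff_adj.mp (hG.preconnected v x)
  have hvy : G.Adj v y := hy.reachable_iff_adj.mp (hG.preconnected v y)
  obtain ⟨p, hp, ht⟩ := h x y
  have hxp : s(v, x) ∈ p.edges := by
    simpa using hx.mem_edges_of_adj hvy hxy p.reverse
  have hyp : s(v, y) ∈ p.edges := hy.mem_edges_of_adj hvx hxy.symm p
  refine ⟨ht.edge_color_ne_of_mem_edges hp hxp hyp (Sym2.mem_mk_left v x)
    (Sym2.mem_mk_left v y) (hxy ∘ Sym2.congr_right.mp), ?_⟩
  exact ht.vertex_color_ne_of_mem_edges hvx.ne hvy.ne hxp (Sym2.mem_mk_left v x)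

lemma vertex_color_ne_of_isBridge (h : TotalProperConnected G cv ce) {v x z : V}
    (he : G.IsBridge s(v, x)) (hzv : z ≠ v) (hzx : z ≠ x) :
    cv v ≠ ce s(v, x) ∨ cv x ≠ ce s(v, x) := by
  obtain ⟨p, -, hp⟩ := h z x
  obtain ⟨q, -, hq⟩ := h z v
  rcases he.mem_edges_or_mem_edges q.reverse p with hmem | hmem
  · rw [Walk.edges_reverse, List.mem_reverse] at hmem
    exact .inr (hq.vertex_color_ne_of_mem_edges hzx.symm he.ne.symm hmem
      (Sym2.mem_mk_right v x))
  · exact .inl (hp.vertex_color_ne_of_mem_edges hzv.symm he.ne hmem (Sym2.mem_mk_left v x))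

lemma ncard_bridges_add_one_le [Finite α] (h : TotalProperConnected G cv ce)
    (hG : G.Connected) {v : V} (hv : 2 ≤ {e | G.IsBridge e ∧ v ∈ e}.ncard) :
    {e | G.IsBridge e ∧ v ∈ e}.ncard + 1 ≤ Nat.card α := by
  set B := {e | G.IsBridge e ∧ v ∈ e}
  have key : ∀ e ∈ B, ∀ e' ∈ B, e ≠ e' → ce e ≠ ce e' ∧ cv v ≠ ce e := by
    rintro e ⟨he, hve⟩ e' ⟨he', hve'⟩ hne
    obtain ⟨x, rfl⟩ := Sym2.mem_iff_exists.mp hve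
    obtain ⟨y, rfl⟩ := Sym2.mem_iff_exists.mp hve'
    exact h.edge_color_ne_of_isBridge hG he he' (by rintro rfl; exact hne rfl)
  have hinj : Set.InjOn ce B := fun e he e' he' hee' ↦
    by_contra fun hne ↦ (key e he e' he' hne).1 hee'
  have hnotMem : cv v ∉ ce '' B := by
    rintro ⟨e, he, hev⟩
    obtain ⟨e', he', hne⟩ := Set.exists_ne_of_one_lt_ncard hv e
    exact (key e he e' he' hne.symm).2 hev.symm
  calc B.ncard + 1 = (insert (cv v) (ce '' B)).ncard := by
        rw [Set.ncard_insert_of_notMem hnotMem, hinj.ncard_image]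
    _ ≤ Nat.card α := Set.ncard_le_card _

end TotalProperConnected

lemma SimpleGraph.Connected.totalProperConnected_inl_inr {G : SimpleGraph V} (hG : G.Connected) :
    TotalProperConnected G (Sum.inl : V → V ⊕ Sym2 V) Sum.inr := fun u v ↦
  haveI := Classical.decEq V
  let p := (hG.preconnected u v).some.toPath
  ⟨p.1, p.2, p.2.isTotalProperWalk_inl_inr⟩

lemma exists_totalProperConnected_fin_tpc [Finite V] {G : SimpleGraph V} (hG : G.Connected) :
    ∃ (cv : V → Fin (tpc G)) (ce : Sym2 V → Fin (tpc G)), TotalProperConnected G cv ce := by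
  classical
  exact Nat.sInf_mem (s := {k | ∃ (cv : V → Fin k) (ce : Sym2 V → Fin k),
    TotalProperConnected G cv ce}) ⟨_, _, _, hG.totalProperConnected_inl_inr.comp_injective
      (Finite.equivFin (V ⊕ Sym2 V)).injective⟩

lemma exists_ne_ne_of_three_le_card [Fintype V] (hn : 3 ≤ Fintype.card V) (x y : V) :
    ∃ z, z ≠ x ∧ z ≠ y := by
  classical
  obtain ⟨z, -, hz⟩ := Finset.exists_mem_notMem_of_card_lt_card (s := {x, y}) (t := .univ)
    (by rw [Finset.card_univ]; have := Finset.card_le_two (a := x) (b := y); omega)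
  exact ⟨z, by simpa [not_or] using hz⟩

lemma ncard_bridges_add_one_le_tpc [Fintype V] {G : SimpleGraph V} (hn : 3 ≤ Fintype.card V)
    (hG : G.Connected) (hbridge : ∃ e, G.IsBridge e) (v : V) :
    {e | G.IsBridge e ∧ v ∈ e}.ncard + 1 ≤ tpc G := by
  obtain ⟨cv, ce, h⟩ := exists_totalProperConnected_fin_tpc hG
  rcases le_or_gt 2 {e | G.IsBridge e ∧ v ∈ e}.ncard with hv | hv
  · simpa using h.ncard_bridges_add_one_le hG hv
  obtain ⟨⟨x, y⟩, he⟩ := hbridge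
  obtain ⟨z, hzx, hzy⟩ := exists_ne_ne_of_three_le_card hn x y
  have htwo : 1 < Nat.card (Fin (tpc G)) := by
    rw [Finite.one_lt_card_iff_nontrivial, nontrivial_iff]
    rcases h.vertex_color_ne_of_isBridge he hzx hzy with hne | hne <;> exact ⟨_, _, hne⟩
  rw [Nat.card_fin] at htwo
  omega

/-- Let `G` be a connected graph of order `n ≥ 3` containing a bridge, and let `b` be the
maximum number of bridges of `G` incident with a single vertex. Then `tpc G ≥ b + 1`. -/
theorem stmt_3 {V : Type*} [Fintype V] (G : SimpleGraph V)
    (hn : 3 ≤ Fintype.card V) (hG : G.Connected)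
    (hbridge : ∃ e : Sym2 V, G.IsBridge e) (b : ℕ)
    (hb : IsGreatest {m | ∃ v : V, m = {e : Sym2 V | G.IsBridge e ∧ v ∈ e}.ncard} b) :
    b + 1 ≤ tpc G := by
  obtain ⟨v, rfl⟩ := hb.1
  exact ncard_bridges_add_one_le_tpc hn hG hbridge v
end

section
/- For every nontrivial connected graph G, tpc(G) ≤ min{Δ(T) + 1 : T is a spanning tree of G}, where Δ(T) denotes the maximum degree of T. -/
open SimpleGraph

variable {V : Type*} {α : Type*}

/-- The maximum degree of a finite graph. -/
noncomputable def maxDeg {V : Type*} [Fintype V] (G : SimpleGraph V) : ℕ :=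
  Finset.univ.sup fun v => (G.neighborSet v).ncard

/-! A colouring in which adjacent vertices, adjacent edges, and incident vertex–edge pairs all
differ makes every path total proper, so it suffices to colour a spanning tree `T` this way with
`Δ(T) + 1` colours in `ℤ/(Δ(T) + 1)` and read its paths in `G`. Root `T` at a leaf and give the
children of every vertex distinct offsets `δ` outside `{0, 1}`; this is possible since no vertex
has more than `Δ(T) - 1` children. With the potential `f v` summing `δ` along the path from `v`
to the root, colour `v` by `f v + 1` and the edge from `v` to its parent by `f v`. If
`Δ(T) ≤ 1`, paths have at most one edge and every colouring works. -/

namespace SimpleGraph.Walk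

variable {G : SimpleGraph V} {u v : V}

lemma support_getD_eq_getVert (w : G.Walk u v) (x : V) {i : ℕ} (hi : i ≤ w.length) :
    w.support.getD i x = w.getVert i := by
  rw [List.getD_eq_getElem _ _ (by rw [length_support]; omega), support_getElem_eq_getVert]

lemma edges_getD_eq (w : G.Walk u v) (e : Sym2 V) {i : ℕ} (hi : i < w.length) :
    w.edges.getD i e = s(w.getVert i, w.getVert (i + 1)) := by
  rw [List.getD_eq_getElem _ _ (by rw [length_edges]; omega), getElem_edges]

lemma IsPath.getVert_ne {w : G.Walk u v} (hw : w.IsPath) {i j : ℕ} (hi : i ≤ w.length)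
    (hj : j ≤ w.length) (hij : i ≠ j) : w.getVert i ≠ w.getVert j :=
  fun h => hij (hw.getVert_injOn hi hj h)

lemma IsPath.length_le_one {w : G.Walk u v} (hw : w.IsPath)
    (hG : ∀ x, (G.neighborSet x).Subsingleton) : w.length ≤ 1 := by
  by_contra! h
  have h₀ : G.Adj (w.getVert 1) (w.getVert 0) := (w.adj_getVert_succ (by omega)).symm
  have h₂ : G.Adj (w.getVert 1) (w.getVert 2) := w.adj_getVert_succ (by omega)
  exact hw.getVert_ne (by omega) (by omega) (by omega) (hG _ h₀ h₂)

end SimpleGraph.Walk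

def IsTotalColoring (G : SimpleGraph V) (cv : V → α) (ce : Sym2 V → α) : Prop :=
  (∀ ⦃a b⦄, G.Adj a b → cv a ≠ cv b ∧ cv a ≠ ce s(a, b)) ∧
    ∀ ⦃a b c⦄, G.Adj a b → G.Adj b c → a ≠ c → ce s(a, b) ≠ ce s(b, c)

lemma IsTotalColoring.isTotalProperWalk {G : SimpleGraph V} {cv : V → α} {ce : Sym2 V → α}
    (h : IsTotalColoring G cv ce) {u v : V} {w : G.Walk u v} (hw : w.IsPath) :
    IsTotalProperWalk cv ce w := by
  obtain ⟨hvert, hedge⟩ := h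
  refine ⟨fun i hi => ?_, fun i _ hi => ?_, fun i h₁ hi => ?_⟩
  · rw [w.edges_getD_eq _ (by omega), w.edges_getD_eq _ hi]
    exact hedge (w.adj_getVert_succ (by omega)) (w.adj_getVert_succ hi)
      (hw.getVert_ne (by omega) (by omega) (by omega))
  · rw [w.support_getD_eq_getVert _ (by omega), w.support_getD_eq_getVert _ (by omega)]
    exact (hvert (w.adj_getVert_succ (by omega))).1
  · obtain ⟨j, rfl⟩ : ∃ j, i = j + 1 := ⟨i - 1, by omega⟩
    rw [w.support_getD_eq_getVert _ (by omega), w.edges_getD_eq _ (by omega),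
      w.edges_getD_eq _ hi, Nat.add_sub_cancel, Sym2.eq_swap]
    exact ⟨(hvert (w.adj_getVert_succ (by omega)).symm).2,
      (hvert (w.adj_getVert_succ hi)).2⟩

lemma isTotalProperWalk_of_length_le_one {G : SimpleGraph V} (cv : V → α) (ce : Sym2 V → α)
    {u v : V} {w : G.Walk u v} (hw : w.length ≤ 1) : IsTotalProperWalk cv ce w :=
  ⟨fun _ _ => by omega, fun _ _ _ => by omega, fun _ _ _ => by omega⟩

lemma TotalProperConnected.mono {T G : SimpleGraph V} {cv : V → α} {ce : Sym2 V → α}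
    (h : TotalProperConnected T cv ce) (hTG : T ≤ G) : TotalProperConnected G cv ce := by
  intro u v
  obtain ⟨w, hw, hproper⟩ := h u v
  have hedges : ∀ e ∈ w.edges, e ∈ G.edgeSet := fun e he =>
    edgeSet_mono hTG (w.edges_subset_edgeSet he)
  refine ⟨w.transfer G hedges, hw.transfer hedges, ?_⟩
  simpa only [IsTotalProperWalk, Walk.length_transfer, Walk.edges_transfer,
    Walk.support_transfer] using hproper

lemma tpc_le_of_totalProperConnected {G : SimpleGraph V} {k : ℕ} {cv : V → Fin k}
    {ce : Sym2 V → Fin k} (h : TotalProperConnected G cv ce) : tpc G ≤ k :=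
  Nat.sInf_le ⟨cv, ce, h⟩

lemma ncard_neighborSet_le_maxDeg [Fintype V] (G : SimpleGraph V) (v : V) :
    (G.neighborSet v).ncard ≤ maxDeg G :=
  Finset.le_sup (f := fun v => (G.neighborSet v).ncard) (Finset.mem_univ v)

lemma totalProperConnected_of_forall_isPath {G : SimpleGraph V} {cv : V → α}
    {ce : Sym2 V → α} (hG : G.Connected)
    (h : ∀ u v (w : G.Walk u v), w.IsPath → IsTotalProperWalk cv ce w) :
    TotalProperConnected G cv ce := fun u v =>
  have ⟨w, hw⟩ := hG.preconnected.exists_isPath u v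
  ⟨w, hw, h u v w hw⟩

lemma ncard_compl_zero_one (K : ℕ) : ({0, 1} : Set (Fin (K + 1)))ᶜ.ncard = K - 1 := by
  rcases K with _ | K
  · rw [Set.ncard_compl]
    simp
  · rw [Set.ncard_compl, Set.ncard_pair (by simp)]
    simp

namespace SimpleGraph.IsTree

variable {T : SimpleGraph V} (hT : T.IsTree) (r : V)

noncomputable def pathToRoot (v : V) : T.Walk v r := (hT.existsUnique_path v r).choose

lemma isPath_pathToRoot (v : V) : (hT.pathToRoot r v).IsPath :=
  (hT.existsUnique_path v r).choose_spec.1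

lemma eq_pathToRoot {v : V} {p : T.Walk v r} (hp : p.IsPath) : p = hT.pathToRoot r v :=
  (hT.existsUnique_path v r).choose_spec.2 p hp

noncomputable def parent (v : V) : V := (hT.pathToRoot r v).snd

def children (p : V) : Set V := {c | c ≠ r ∧ hT.parent r c = p}

lemma tail_pathToRoot (v : V) :
    (hT.pathToRoot r v).tail = hT.pathToRoot r (hT.parent r v) :=
  hT.eq_pathToRoot r (hT.isPath_pathToRoot r v).tail

lemma parent_root : hT.parent r r = r := by
  rw [parent, ← hT.eq_pathToRoot r Walk.IsPath.nil]
  rfl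

lemma parent_eq_of_adj {a b : V} (hab : T.Adj a b) :
    (b ≠ r ∧ hT.parent r b = a) ∨ (a ≠ r ∧ hT.parent r a = b) := by
  have ne_root {a b : V} (hab : T.Adj a b) (h : hT.parent r b = a) : b ≠ r := by
    rintro rfl
    exact hab.ne (h.symm.trans (hT.parent_root _))
  by_cases hb : b ∈ (hT.pathToRoot r a).support
  · have h := (hT.isAcyclic.eq_snd_of_adj_start (hT.isPath_pathToRoot r a) hab hb).symm
    exact Or.inr ⟨ne_root hab.symm h, h⟩
  · have h : hT.parent r b = a := by
      rw [parent, ← hT.eq_pathToRoot r ((hT.isPath_pathToRoot r a).cons (h := hab.symm) hb),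
        Walk.snd_cons]
    exact Or.inl ⟨ne_root hab h, h⟩

variable {r}

lemma adj_parent {v : V} (hv : v ≠ r) : T.Adj v (hT.parent r v) :=
  Walk.adj_snd (Walk.not_nil_of_ne hv)

lemma length_pathToRoot_parent {v : V} (hv : v ≠ r) :
    (hT.pathToRoot r (hT.parent r v)).length + 1 = (hT.pathToRoot r v).length := by
  have h := Walk.length_tail_add_one (Walk.not_nil_of_ne hv (p := hT.pathToRoot r v))
  rwa [hT.tail_pathToRoot] at h

lemma eq_of_parent_eq_of_parent_eq {a b : V} (hab : hT.parent r a = b)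
    (hba : hT.parent r b = a) : a = b := by
  by_cases ha : a = r
  · rw [← hab, ha, hT.parent_root]
  by_cases hb : b = r
  · rw [← hba, hb, hT.parent_root]
  have h₁ := hT.length_pathToRoot_parent ha
  have h₂ := hT.length_pathToRoot_parent hb
  rw [hab] at h₁
  rw [hba] at h₂
  omega

lemma ncard_children_le [Finite V] {K : ℕ} (hdeg : ∀ v, (T.neighborSet v).ncard ≤ K)
    (hr : (T.neighborSet r).ncard ≤ K - 1) (p : V) : (hT.children r p).ncard ≤ K - 1 := by
  have hsub : hT.children r p ⊆ T.neighborSet p := by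
    rintro c ⟨hc, rfl⟩
    exact (hT.adj_parent hc).symm
  by_cases hp : p = r
  · subst hp
    exact (Set.ncard_le_ncard hsub).trans hr
  have hparent : hT.parent r p ∉ hT.children r p := fun ⟨_, h⟩ =>
    (hT.adj_parent hp).ne (hT.eq_of_parent_eq_of_parent_eq rfl h)
  calc (hT.children r p).ncard
      ≤ (T.neighborSet p \ {hT.parent r p}).ncard :=
        Set.ncard_le_ncard fun c hc => ⟨hsub hc, fun h => hparent (h ▸ hc)⟩
    _ = (T.neighborSet p).ncard - 1 := Set.ncard_sdiff_singleton_of_mem (hT.adj_parent hp)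
    _ ≤ K - 1 := Nat.sub_le_sub_right (hdeg p) 1

variable (r) in
noncomputable def potential {A : Type*} [AddCommMonoid A] (δ : V → A) (v : V) : A :=
  ((hT.pathToRoot r v).support.map δ).sum

variable (r) in
open Classical in
noncomputable def childEdgeColoring {A : Type*} [Zero A] (g : V → A) : Sym2 V → A :=
  Sym2.lift ⟨fun a b =>
    if hT.parent r b = a then g b else if hT.parent r a = b then g a else 0, fun a b => by
      dsimp only
      split_ifs with h₁ h₂ <;> first | rfl | rw [hT.eq_of_parent_eq_of_parent_eq h₂ h₁]⟩

lemma potential_eq_add {A : Type*} [AddCommMonoid A] (δ : V → A) {v : V} (hv : v ≠ r) :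
    hT.potential r δ v = δ v + hT.potential r δ (hT.parent r v) := by
  have h := Walk.cons_support_tail (Walk.not_nil_of_ne hv (p := hT.pathToRoot r v))
  rw [hT.tail_pathToRoot] at h
  rw [potential, potential, ← h, List.map_cons, List.sum_cons]
  rfl

lemma childEdgeColoring_mk_of_parent_eq {A : Type*} [Zero A] (g : V → A) {a b : V}
    (h : hT.parent r b = a) : hT.childEdgeColoring r g s(a, b) = g b := by
  rw [childEdgeColoring, Sym2.lift_mk]
  exact if_pos h

lemma isTotalColoring_potential {A : Type*} [AddCommGroup A] {e : A} (he : e ≠ 0) {δ : V → A}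
    (hδ : ∀ v, v ≠ r → δ v ≠ 0 ∧ δ v ≠ e)
    (hδ_inj : ∀ a c, a ≠ r → c ≠ r → hT.parent r a = hT.parent r c → δ a = δ c →
      a = c) :
    IsTotalColoring T (fun v => hT.potential r δ v + e)
      (hT.childEdgeColoring r (hT.potential r δ)) := by
  set f := hT.potential r δ
  have hf : ∀ v, v ≠ r → f v = δ v + f (hT.parent r v) := fun v => hT.potential_eq_add δ
  have hce : ∀ v, hT.childEdgeColoring r f s(hT.parent r v, v) = f v := fun v =>
    hT.childEdgeColoring_mk_of_parent_eq f rfl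
  refine ⟨fun a b hab => ?_, fun a b c hab hbc hac => ?_⟩
  · dsimp only
    rcases hT.parent_eq_of_adj r hab with ⟨hb, rfl⟩ | ⟨ha, rfl⟩
    · rw [hce, hf b hb]
      refine ⟨fun h => (hδ b hb).1 ?_, fun h => (hδ b hb).2 ?_⟩
      · simpa using h
      · simpa [add_comm] using h.symm
    · rw [Sym2.eq_swap, hce, hf a ha]
      refine ⟨fun h => (hδ a ha).1 ?_, fun h => he ?_⟩
      · simpa using h
      · simpa using h
  · rcases hT.parent_eq_of_adj r hab with ⟨hb, rfl⟩ | ⟨ha, rfl⟩ <;>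
      rcases hT.parent_eq_of_adj r hbc with ⟨hc, h⟩ | ⟨-, rfl⟩
    · rw [hce, ← h, hce, hf c hc, h]
      intro h'
      exact (hδ c hc).1 (by simpa using h')
    · exact absurd rfl hac
    · rw [Sym2.eq_swap, hce, ← h, hce, hf a ha, hf c hc, h]
      intro h'
      exact hac (hδ_inj a c ha hc h.symm (by simpa using h'))
    · rw [Sym2.eq_swap, hce, Sym2.eq_swap, hce, hf a ha]
      intro h'
      exact (hδ a ha).1 (by simpa using h')

end SimpleGraph.IsTree

namespace SimpleGraph.IsTree

variable {T : SimpleGraph V}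

lemma exists_ncard_neighborSet_le_one [Finite V] (hT : T.IsTree) :
    ∃ r, (T.neighborSet r).ncard ≤ 1 := by
  rcases subsingleton_or_nontrivial V with hV | hV
  · obtain ⟨r⟩ := hT.connected.nonempty
    exact ⟨r, Set.ncard_le_one_iff_subsingleton.mpr Set.subsingleton_of_subsingleton⟩
  · classical
    have := Fintype.ofFinite V
    obtain ⟨r, hr⟩ := hT.exists_vert_degree_one_of_nontrivial
    exact ⟨r, by rw [Set.ncard_eq_toFinset_card', Set.toFinset_card,
      card_neighborSet_eq_degree, hr]⟩

lemma exists_offsets [Finite V] (hT : T.IsTree) {r : V} {K : ℕ}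
    (hdeg : ∀ v, (T.neighborSet v).ncard ≤ K)
    (hr : (T.neighborSet r).ncard ≤ K - 1) :
    ∃ δ : V → Fin (K + 1), (∀ v, v ≠ r → δ v ≠ 0 ∧ δ v ≠ 1) ∧
      ∀ a c, a ≠ r → c ≠ r → hT.parent r a = hT.parent r c → δ a = δ c → a = c := by
  have hcard (p : V) : (hT.children r p).encard ≤ ({0, 1} : Set (Fin (K + 1)))ᶜ.encard := by
    rw [← (Set.toFinite _).cast_ncard_eq, ← (Set.toFinite _).cast_ncard_eq,
      ncard_compl_zero_one]
    exact_mod_cast hT.ncard_children_le hdeg hr p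
  choose σ hσ hσ_inj using fun p => (Set.toFinite _).exists_injOn_of_encard_le (hcard p)
  refine ⟨fun v => σ (hT.parent r v) v, fun v hv => ?_, fun a c ha hc hac h => ?_⟩
  · simpa [not_or] using hσ _ ⟨hv, rfl⟩
  · refine hσ_inj _ ⟨ha, rfl⟩ ⟨hc, hac.symm⟩ ?_
    simpa only [hac] using h

lemma exists_isTotalColoring [Finite V] (hT : T.IsTree) {K : ℕ} (hK : 2 ≤ K)
    (hdeg : ∀ v, (T.neighborSet v).ncard ≤ K) :
    ∃ (cv : V → Fin (K + 1)) (ce : Sym2 V → Fin (K + 1)), IsTotalColoring T cv ce := by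
  obtain ⟨r, hr⟩ := hT.exists_ncard_neighborSet_le_one
  obtain ⟨δ, hδ, hδ_inj⟩ := hT.exists_offsets hdeg (r := r) (by omega)
  have h10 : (1 : Fin (K + 1)) ≠ 0 := by
    rw [Ne, Fin.one_eq_zero_iff]
    omega
  exact ⟨_, _, hT.isTotalColoring_potential h10 hδ hδ_inj⟩

lemma exists_totalProperConnected [Finite V] (hT : T.IsTree) {K : ℕ}
    (hdeg : ∀ v, (T.neighborSet v).ncard ≤ K) :
    ∃ (cv : V → Fin (K + 1)) (ce : Sym2 V → Fin (K + 1)), TotalProperConnected T cv ce := by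
  by_cases hK : 2 ≤ K
  · obtain ⟨cv, ce, h⟩ := hT.exists_isTotalColoring hK hdeg
    exact ⟨cv, ce, totalProperConnected_of_forall_isPath hT.connected
      fun _ _ _ hw => h.isTotalProperWalk hw⟩
  · have hdeg' (x : V) : (T.neighborSet x).Subsingleton :=
      Set.ncard_le_one_iff_subsingleton.mp (by have := hdeg x; omega)
    exact ⟨0, 0, totalProperConnected_of_forall_isPath hT.connected
      fun _ _ _ hw => isTotalProperWalk_of_length_le_one _ _ (hw.length_le_one hdeg')⟩

end SimpleGraph.IsTree

theorem stmt_5_general {V : Type*} [Fintype V] (G : SimpleGraph V) :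
    ∀ T : SimpleGraph V, T ≤ G → T.IsTree → tpc G ≤ maxDeg T + 1 := by
  intro T hTG hT
  obtain ⟨cv, ce, h⟩ := hT.exists_totalProperConnected (ncard_neighborSet_le_maxDeg T)
  exact tpc_le_of_totalProperConnected (h.mono hTG)

/-- For every nontrivial connected graph `G`,
`tpc G ≤ min {Δ(T) + 1 : T a spanning tree of G}`. -/
theorem stmt_5 {V : Type*} [Fintype V] (G : SimpleGraph V)
    (hG : G.Connected) (hV : Nontrivial V) :
    ∀ T : SimpleGraph V, T ≤ G → T.IsTree → tpc G ≤ maxDeg T + 1 :=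
  stmt_5_general G
end

section
/- If G is a complete multipartite graph that is neither a complete graph nor a tree, then tpc(G) = 3. -/
open SimpleGraph

variable {V : Type*} {α : Type*}

/-!
Two distinct vertices in the same part are not adjacent, so a total proper path between them has
an inner vertex whose colour differs from the colours of its two edges, which differ from each
other: at least three colours are needed.

Conversely, since `G` is not complete some part contains two vertices `a₁ ≠ a₂`, and since `G` is
connected but not a star (a tree), there are two vertices `b₁ ≠ b₂` outside that part. Three
colours then suffice: two vertices in the part of `a₁` are joined through `b₁` or along
`u b₁ a₁ b₂ v`, two vertices in another part through `a₁`, through `a₂`, or along `u a₁ b₁ a₂ v`.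
-/

section TotalProperWalk

variable {G : SimpleGraph V} {cv : V → α} {ce : Sym2 V → α}

lemma exists_isTotalProperPath_nil (u : V) :
    ∃ w : G.Walk u u, w.IsPath ∧ IsTotalProperWalk cv ce w :=
  ⟨.nil, .nil, by refine ⟨?_, ?_, ?_⟩ <;> simp⟩

lemma exists_isTotalProperPath_of_adj {u v : V} (h : G.Adj u v) :
    ∃ w : G.Walk u v, w.IsPath ∧ IsTotalProperWalk cv ce w :=
  ⟨.cons h .nil, by simp [h.ne], by refine ⟨?_, ?_, ?_⟩ <;> rintro (_ | i) <;> simp_all⟩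

lemma exists_isTotalProperPath_two {u x v : V} (hux : G.Adj u x) (hxv : G.Adj x v) (huv : u ≠ v)
    (hc : ce s(u, x) ≠ ce s(x, v) ∧ cv x ≠ ce s(u, x) ∧ cv x ≠ ce s(x, v)) :
    ∃ w : G.Walk u v, w.IsPath ∧ IsTotalProperWalk cv ce w := by
  refine ⟨.cons hux (.cons hxv .nil), by simp [hux.ne, hxv.ne, huv], ?_, ?_, ?_⟩ <;>
    rintro (_ | _ | i) <;> simp_all

lemma exists_isTotalProperPath_four {u x y z v : V} (hux : G.Adj u x) (hxy : G.Adj x y)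
    (hyz : G.Adj y z) (hzv : G.Adj z v) (hd : [u, x, y, z, v].Nodup)
    (hc : ce s(u, x) ≠ ce s(x, y) ∧ ce s(x, y) ≠ ce s(y, z) ∧ ce s(y, z) ≠ ce s(z, v) ∧
      cv x ≠ cv y ∧ cv y ≠ cv z ∧ cv x ≠ ce s(u, x) ∧ cv x ≠ ce s(x, y) ∧
      cv y ≠ ce s(x, y) ∧ cv y ≠ ce s(y, z) ∧ cv z ≠ ce s(y, z) ∧ cv z ≠ ce s(z, v)) :
    ∃ w : G.Walk u v, w.IsPath ∧ IsTotalProperWalk cv ce w := by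
  refine ⟨.cons hux (.cons hxy (.cons hyz (.cons hzv .nil))), Walk.isPath_def _ |>.mpr hd,
    ?_, ?_, ?_⟩ <;> rintro (_ | _ | _ | _ | i) <;> simp_all

lemma three_le_card_of_totalProperConnected [Fintype α] (h : TotalProperConnected G cv ce)
    {u v : V} (huv : u ≠ v) (hnadj : ¬ G.Adj u v) : 3 ≤ Fintype.card α := by
  obtain ⟨w, -, hw⟩ := h u v
  match w, hw with
  | .nil, _ => exact absurd rfl huv
  | .cons h .nil, _ => exact absurd h hnadj
  | .cons _ (.cons _ _), hw =>
    have he := hw.1 0 (by simp)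
    have hx := hw.2.2 1 le_rfl (by simp)
    simp only [Walk.edges_cons, Walk.support_cons, List.getD_cons_zero,
      List.getD_cons_succ] at he hx
    exact Fintype.two_lt_card_iff.mpr ⟨_, _, _, he, fun e => hx.1 e.symm, fun e => hx.2 e.symm⟩

end TotalProperWalk

lemma tpc_eq_three {G : SimpleGraph V} {cv : V → Fin 3} {ce : Sym2 V → Fin 3}
    (h : TotalProperConnected G cv ce) {u v : V} (huv : u ≠ v) (hnadj : ¬ G.Adj u v) :
    tpc G = 3 :=
  le_antisymm (Nat.sInf_le ⟨cv, ce, h⟩) <| le_csInf ⟨3, cv, ce, h⟩ fun _ ⟨_, _, hk⟩ => by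
    simpa using three_le_card_of_totalProperConnected hk huv hnadj

section CompleteMultipartite

variable {ι : Type*} {f : ι → Type*}

@[simp, grind =]
lemma completeMultipartiteGraph_adj {u v : Σ i, f i} :
    (completeMultipartiteGraph f).Adj u v ↔ u.1 ≠ v.1 := Iff.rfl

lemma exists_ne_fst_eq_of_completeMultipartiteGraph_ne_top
    (h : completeMultipartiteGraph f ≠ ⊤) : ∃ a b : Σ i, f i, a ≠ b ∧ a.1 = b.1 := by
  by_contra! hne
  exact h <| top_le_iff.mp fun a b hab => hne a b hab

lemma isAcyclic_completeMultipartiteGraph_of_forall_fst_ne_eq {i : ι} {x : Σ i, f i}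
    (h : ∀ y : Σ i, f i, y.1 ≠ i → y = x) : (completeMultipartiteGraph f).IsAcyclic :=
  (isAcyclic_starGraph x).anti fun u v huv => by
    refine starGraph_adj.mpr ⟨fun e => huv (congrArg Sigma.fst e), ?_⟩
    by_cases hu : u.1 = i
    · exact .inr (h v fun hv => huv (hu.trans hv.symm))
    · exact .inl (h u hu)

variable [DecidableEq ι] [∀ i, DecidableEq (f i)]

/- Along each of the paths used below, the colours of the edges and inner vertices, read in
order, run cyclically through `0, 1, 2` (upwards or downwards), while the total proper conditions
only compare entries at most two apart in this sequence. -/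
def multipartiteVertexColor (a₁ b₂ x : Σ i, f i) : Fin 3 :=
  if x = a₁ then 1 else if x.1 = a₁.1 ∨ x = b₂ then 2 else 0

def multipartiteEdgeColor (a₁ b₁ b₂ : Σ i, f i) (e : Sym2 (Σ i, f i)) : Fin 3 :=
  if a₁ ∈ e then (if b₁ ∈ e then 2 else 0) else if b₁ ∈ e ∨ b₂ ∈ e then 1 else 0

lemma exists_isTotalProperPath_of_fst_eq_fst {a₁ b₁ b₂ u v : Σ i, f i}
    (hb₁ : b₁.1 ≠ a₁.1) (hb₂ : b₂.1 ≠ a₁.1) (hb : b₁ ≠ b₂)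
    (hu : u.1 = a₁.1) (hv : v.1 = a₁.1) (huv : u ≠ v) :
    ∃ w : (completeMultipartiteGraph f).Walk u v, w.IsPath ∧
      IsTotalProperWalk (multipartiteVertexColor a₁ b₂) (multipartiteEdgeColor a₁ b₁ b₂) w := by
  by_cases ha : u = a₁ ∨ v = a₁
  · refine exists_isTotalProperPath_two (x := b₁) (by grind) (by grind) huv ?_
    simp [multipartiteVertexColor, multipartiteEdgeColor]
    grind
  · refine exists_isTotalProperPath_four (x := b₁) (y := a₁) (z := b₂) (by grind) (by grind)
      (by grind) (by grind) (by simp; grind) ?_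
    simp [multipartiteVertexColor, multipartiteEdgeColor]
    grind (splits := 30)

lemma exists_isTotalProperPath_of_fst_eq_of_fst_ne {a₁ a₂ b₁ b₂ u v : Σ i, f i}
    (ha : a₁ ≠ a₂) (ha₂ : a₂.1 = a₁.1) (hb₁ : b₁.1 ≠ a₁.1) (hb₂ : b₂.1 ≠ a₁.1) (hb : b₁ ≠ b₂)
    (hu : u.1 ≠ a₁.1) (huv₁ : u.1 = v.1) (huv : u ≠ v) :
    ∃ w : (completeMultipartiteGraph f).Walk u v, w.IsPath ∧
      IsTotalProperWalk (multipartiteVertexColor a₁ b₂) (multipartiteEdgeColor a₁ b₁ b₂) w := by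
  by_cases hboth : (u = b₁ ∨ u = b₂) ∧ (v = b₁ ∨ v = b₂)
  · refine exists_isTotalProperPath_two (x := a₁) (by grind) (by grind) huv ?_
    simp [multipartiteVertexColor, multipartiteEdgeColor]
    grind
  by_cases hone : u = b₁ ∨ u = b₂ ∨ v = b₁ ∨ v = b₂
  · refine exists_isTotalProperPath_two (x := a₂) (by grind) (by grind) huv ?_
    simp [multipartiteVertexColor, multipartiteEdgeColor]
    grind
  · refine exists_isTotalProperPath_four (x := a₁) (y := b₁) (z := a₂) (by grind) (by grind)
      (by grind) (by grind) (by simp; grind) ?_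
    simp [multipartiteVertexColor, multipartiteEdgeColor]
    grind (splits := 30)

lemma totalProperConnected_completeMultipartiteGraph {a₁ a₂ b₁ b₂ : Σ i, f i}
    (ha : a₁ ≠ a₂) (ha₂ : a₂.1 = a₁.1) (hb₁ : b₁.1 ≠ a₁.1) (hb₂ : b₂.1 ≠ a₁.1) (hb : b₁ ≠ b₂) :
    TotalProperConnected (completeMultipartiteGraph f)
      (multipartiteVertexColor a₁ b₂) (multipartiteEdgeColor a₁ b₁ b₂) := by
  intro u v
  obtain rfl | huv := eq_or_ne u v
  · exact exists_isTotalProperPath_nil u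
  by_cases huv₁ : u.1 = v.1
  · by_cases hu : u.1 = a₁.1
    · exact exists_isTotalProperPath_of_fst_eq_fst hb₁ hb₂ hb hu (huv₁ ▸ hu) huv
    · exact exists_isTotalProperPath_of_fst_eq_of_fst_ne ha ha₂ hb₁ hb₂ hb hu huv₁ huv
  · exact exists_isTotalProperPath_of_adj huv₁

end CompleteMultipartite

theorem stmt_9_general {ι : Type*} (f : ι → Type*)
    (hconn : (completeMultipartiteGraph f).Connected)
    (hnc : completeMultipartiteGraph f ≠ (⊤ : SimpleGraph (Σ i, f i)))
    (hnt : ¬ (completeMultipartiteGraph f).IsTree) :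
    tpc (completeMultipartiteGraph f) = 3 := by
  classical
  obtain ⟨a₁, a₂, ha, ha₂⟩ := exists_ne_fst_eq_of_completeMultipartiteGraph_ne_top hnc
  have : Nontrivial (Σ i, f i) := ⟨a₁, a₂, ha⟩
  obtain ⟨b₁, hb₁⟩ := hconn.preconnected.exists_adj_of_nontrivial a₁
  obtain ⟨b₂, hb₂, hb⟩ : ∃ b₂ : Σ i, f i, b₂.1 ≠ a₁.1 ∧ b₁ ≠ b₂ := by
    by_contra! h
    exact hnt ⟨hconn, isAcyclic_completeMultipartiteGraph_of_forall_fst_ne_eq fun y hy =>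
      (h y hy).symm⟩
  exact tpc_eq_three (totalProperConnected_completeMultipartiteGraph ha ha₂.symm hb₁.symm hb₂ hb)
    ha (not_not.mpr ha₂)

/-- If `G` is a complete multipartite graph that is neither a complete graph nor a tree,
then `tpc G = 3`. -/
theorem stmt_9 {ι : Type*} [Fintype ι] (f : ι → Type*) [∀ i, Fintype (f i)]
    (hconn : (completeMultipartiteGraph f).Connected)
    (hnc : completeMultipartiteGraph f ≠ (⊤ : SimpleGraph (Σ i, f i)))
    (hnt : ¬ (completeMultipartiteGraph f).IsTree) :
    tpc (completeMultipartiteGraph f) = 3 :=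
  stmt_9_general f hconn hnc hnt
end
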